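/- arXiv:1001.1145 — 2 statements merged into one kernel-verified Lean document; each statement's English description precedes it below -/
import Mathlib

section
/- Let u, v, z be smooth 2π-periodic-in-x solutions of u_t = v - u u_x, v_t = z - u v_x, z_t = - u z_x. Then for every natural number n, the functional H_n^{(2)} := ∫₀^{2π} z_x v zⁿ dx is conserved in time. -/
open Real

noncomputable def pdx (f : ℝ → ℝ → ℝ) (x t : ℝ) : ℝ := deriv (fun y => f y t) x

noncomputable def pdt (f : ℝ → ℝ → ℝ) (x t : ℝ) : ℝ := deriv (fun s => f x s) t

/-- The material derivative `D_t = ∂/∂t + u ∂/∂x` associated to the velocity `u`. -/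
noncomputable def matDt (u f : ℝ → ℝ → ℝ) : ℝ → ℝ → ℝ :=
  fun x t => pdt f x t + u x t * pdx f x t

section aux

variable {f : ℝ → ℝ → ℝ}

lemma curveX_hasDerivAt (x t : ℝ) : HasDerivAt (fun y : ℝ => (y, t)) ((1 : ℝ), (0 : ℝ)) x :=
  (hasDerivAt_id x).prodMk (hasDerivAt_const x t)

lemma curveT_hasDerivAt (x t : ℝ) : HasDerivAt (fun s : ℝ => (x, s)) ((0 : ℝ), (1 : ℝ)) t :=
  (hasDerivAt_const t x).prodMk (hasDerivAt_id t)

lemma hasDerivAt_sliceX (hf : ContDiff ℝ (⊤ : ℕ∞) (Function.uncurry f)) (x t : ℝ) :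
    HasDerivAt (fun y => f y t) (fderiv ℝ (Function.uncurry f) (x, t) (1, 0)) x :=
  ((hf.differentiable (by simp) (x, t)).hasFDerivAt).comp_hasDerivAt (l := Function.uncurry f) x (curveX_hasDerivAt x t)

lemma hasDerivAt_sliceT (hf : ContDiff ℝ (⊤ : ℕ∞) (Function.uncurry f)) (x t : ℝ) :
    HasDerivAt (fun s => f x s) (fderiv ℝ (Function.uncurry f) (x, t) (0, 1)) t :=
  ((hf.differentiable (by simp) (x, t)).hasFDerivAt).comp_hasDerivAt t (curveT_hasDerivAt x t)

lemma pdx_eq (hf : ContDiff ℝ (⊤ : ℕ∞) (Function.uncurry f)) (x t : ℝ) :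
    pdx f x t = fderiv ℝ (Function.uncurry f) (x, t) (1, 0) :=
  (hasDerivAt_sliceX hf x t).deriv

lemma pdt_eq (hf : ContDiff ℝ (⊤ : ℕ∞) (Function.uncurry f)) (x t : ℝ) :
    pdt f x t = fderiv ℝ (Function.uncurry f) (x, t) (0, 1) :=
  (hasDerivAt_sliceT hf x t).deriv

lemma contDiff_pdx (hf : ContDiff ℝ (⊤ : ℕ∞) (Function.uncurry f)) :
    ContDiff ℝ (⊤ : ℕ∞) (fun p : ℝ × ℝ => pdx f p.1 p.2) := by
  have : (fun p : ℝ × ℝ => pdx f p.1 p.2)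
      = fun p : ℝ × ℝ => fderiv ℝ (Function.uncurry f) p ((1 : ℝ), (0 : ℝ)) := by
    funext p; exact pdx_eq hf p.1 p.2
  rw [this]
  exact (hf.fderiv_right (by simp)).clm_apply contDiff_const

lemma contDiff_pdt (hf : ContDiff ℝ (⊤ : ℕ∞) (Function.uncurry f)) :
    ContDiff ℝ (⊤ : ℕ∞) (fun p : ℝ × ℝ => pdt f p.1 p.2) := by
  have : (fun p : ℝ × ℝ => pdt f p.1 p.2)
      = fun p : ℝ × ℝ => fderiv ℝ (Function.uncurry f) p ((0 : ℝ), (1 : ℝ)) := by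
    funext p; exact pdt_eq hf p.1 p.2
  rw [this]
  exact (hf.fderiv_right (by simp)).clm_apply contDiff_const

/-- Clairaut for smooth functions of two real variables. -/
lemma pdt_pdx_comm (hf : ContDiff ℝ (⊤ : ℕ∞) (Function.uncurry f)) (x t : ℝ) :
    pdt (fun a b => pdx f a b) x t = pdx (fun a b => pdt f a b) x t := by
  set F := Function.uncurry f with hF
  set G := fderiv ℝ F with hG
  have hGc : ContDiff ℝ (⊤ : ℕ∞) G := hf.fderiv_right (by simp)
  have hGd := hGc.differentiable (by simp)
  have hsymm : ∀ w y : ℝ × ℝ, fderiv ℝ G (x, t) w y = fderiv ℝ G (x, t) y w :=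
    second_derivative_symmetric (fun p => (hf.differentiable (by simp) p).hasFDerivAt)
      (hGd (x, t)).hasFDerivAt
  have h1 : HasDerivAt (fun s => G (x, s)) (fderiv ℝ G (x, t) (0, 1)) t :=
    (hGd (x, t)).hasFDerivAt.comp_hasDerivAt t (curveT_hasDerivAt x t)
  have h2 : HasDerivAt (fun y => G (y, t)) (fderiv ℝ G (x, t) (1, 0)) x :=
    (hGd (x, t)).hasFDerivAt.comp_hasDerivAt x (curveX_hasDerivAt x t)
  have e1 : pdt (fun a b => pdx f a b) x t = fderiv ℝ G (x, t) (0, 1) (1, 0) := by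
    have : (fun s => pdx f x s) = fun s => G (x, s) ((1 : ℝ), (0 : ℝ)) := by
      funext s; exact pdx_eq hf x s
    have h := h1.clm_apply (hasDerivAt_const t ((1 : ℝ), (0 : ℝ)))
    simp only [map_zero, add_zero] at h
    rw [pdt, this]
    exact h.deriv
  have e2 : pdx (fun a b => pdt f a b) x t = fderiv ℝ G (x, t) (1, 0) (0, 1) := by
    have : (fun y => pdt f y t) = fun y => G (y, t) ((0 : ℝ), (1 : ℝ)) := by
      funext y; exact pdt_eq hf y t
    have h := h2.clm_apply (hasDerivAt_const x ((0 : ℝ), (1 : ℝ)))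
    simp only [map_zero, add_zero] at h
    rw [pdx, this]
    exact h.deriv
  rw [e1, e2, hsymm]

lemma periodic_pdx {c : ℝ} (hp : ∀ t, Function.Periodic (fun x => f x t) c) (t : ℝ) :
    Function.Periodic (fun x => pdx f x t) c := by
  intro x
  have : (fun y => f (y + c) t) = fun y => f y t := funext fun y => hp t y
  simp only [pdx]
  rw [← deriv_comp_add_const (fun y => f y t) c x]
  simp only [this]

end aux

section aux2
variable {f : ℝ → ℝ → ℝ}

lemma sliceT_hasDerivAt_pdt (hf : ContDiff ℝ (⊤ : ℕ∞) (Function.uncurry f)) (x t : ℝ) :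
    HasDerivAt (fun s => f x s) (pdt f x t) t := by
  have h := hasDerivAt_sliceT hf x t
  rwa [← pdt_eq hf x t] at h

lemma sliceX_hasDerivAt_pdx (hf : ContDiff ℝ (⊤ : ℕ∞) (Function.uncurry f)) (x t : ℝ) :
    HasDerivAt (fun y => f y t) (pdx f x t) x := by
  have h := hasDerivAt_sliceX hf x t
  rwa [← pdx_eq hf x t] at h

end aux2

theorem statement6
    (u v z : ℝ → ℝ → ℝ)
    (hu : ContDiff ℝ (⊤ : ℕ∞) (Function.uncurry u))
    (hv : ContDiff ℝ (⊤ : ℕ∞) (Function.uncurry v))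
    (hz : ContDiff ℝ (⊤ : ℕ∞) (Function.uncurry z))
    (hup : ∀ t, Function.Periodic (fun x => u x t) (2 * Real.pi))
    (hvp : ∀ t, Function.Periodic (fun x => v x t) (2 * Real.pi))
    (hzp : ∀ t, Function.Periodic (fun x => z x t) (2 * Real.pi))
    (heq1 : ∀ x t, pdt u x t = v x t - u x t * pdx u x t)
    (heq2 : ∀ x t, pdt v x t = z x t - u x t * pdx v x t)
    (heq3 : ∀ x t, pdt z x t = - u x t * pdx z x t) :
    ∀ n : ℕ, ∀ t, deriv (fun s => ∫ x in (0:ℝ)..(2 * Real.pi),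
      (pdx z x s * v x s * (z x s) ^ n)) t = 0 := by
  intro n t₀
  -- abbreviations
  set g : ℝ → ℝ → ℝ := fun x s => pdx z x s * v x s * z x s ^ n with hgdef
  set flux : ℝ → ℝ → ℝ :=
    fun x s => z x s ^ (n + 2) / ((n : ℝ) + 2)
      - u x s * pdx z x s * v x s * z x s ^ n with hfluxdef
  -- smoothness
  have hzx : ContDiff ℝ (⊤ : ℕ∞) (Function.uncurry (fun a b => pdx z a b)) := contDiff_pdx hz
  have hguc : ContDiff ℝ (⊤ : ℕ∞) (Function.uncurry g) := (hzx.mul hv).mul (hz.pow n)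
  have hfluxc : ContDiff ℝ (⊤ : ℕ∞) (Function.uncurry flux) :=
    ((hz.pow (n + 2)).div_const _).sub (((hu.mul hzx).mul hv).mul (hz.pow n))
  -- key pointwise identity : ∂ₜ g = ∂ₓ flux
  have key : ∀ x s, pdt g x s = pdx flux x s := by
    intro x s
    have hA := sliceT_hasDerivAt_pdt hzx x s
    have hB := sliceT_hasDerivAt_pdt hv x s
    have hC := sliceT_hasDerivAt_pdt hz x s
    have hU := sliceX_hasDerivAt_pdx hu x s
    have hV := sliceX_hasDerivAt_pdx hv x s
    have hZ := sliceX_hasDerivAt_pdx hz x s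
    have hZx := sliceX_hasDerivAt_pdx hzx x s
    -- time derivative of g
    have hgt : pdt g x s =
        (pdt (fun a b => pdx z a b) x s * v x s + pdx z x s * pdt v x s) * z x s ^ n
          + pdx z x s * v x s * ((n : ℝ) * z x s ^ (n - 1) * pdt z x s) :=
      ((hA.mul hB).mul (hC.pow n)).deriv
    -- Clairaut + the equation for z
    have hclair : pdt (fun a b => pdx z a b) x s =
        -(pdx u x s * pdx z x s + u x s * pdx (fun a b => pdx z a b) x s) := by
      rw [pdt_pdx_comm hz x s]
      have hfun : (fun y => pdt z y s) = fun y => -u y s * pdx z y s :=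
        funext fun y => heq3 y s
      have hd : HasDerivAt (fun y => -u y s * pdx z y s)
          (-(pdx u x s) * pdx z x s + -u x s * pdx (fun a b => pdx z a b) x s) x :=
        hU.neg.mul hZx
      show deriv (fun y => pdt z y s) x = _
      rw [hfun, hd.deriv]
      ring
    -- space derivative of flux
    have hfx : pdx flux x s =
        ((n : ℝ) + 2) * z x s ^ (n + 1) * pdx z x s / ((n : ℝ) + 2)
          - (((pdx u x s * pdx z x s + u x s * pdx (fun a b => pdx z a b) x s) * v x s
              + u x s * pdx z x s * pdx v x s) * z x s ^ n
            + u x s * pdx z x s * v x s * ((n : ℝ) * z x s ^ (n - 1) * pdx z x s)) := by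
      have hd : HasDerivAt (fun y => flux y s)
          (((n : ℝ) + 2) * z x s ^ (n + 1) * pdx z x s / ((n : ℝ) + 2)
            - (((pdx u x s * pdx z x s + u x s * pdx (fun a b => pdx z a b) x s) * v x s
                + u x s * pdx z x s * pdx v x s) * z x s ^ n
              + u x s * pdx z x s * v x s * ((n : ℝ) * z x s ^ (n - 1) * pdx z x s))) x := by
        have h1 := (hZ.fun_pow (n + 2)).div_const ((n : ℝ) + 2)
        have h2 := (((hU.fun_mul hZx).fun_mul hV).fun_mul (hZ.fun_pow n))
        have := h1.fun_sub h2
        refine this.congr_deriv ?_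
        push_cast
        ring
      exact hd.deriv
    have hn2 : ((n : ℝ) + 2) ≠ 0 := by positivity
    rw [hgt, hfx, hclair, heq2, heq3]
    field_simp
    ring
  -- the integral of ∂ₓ flux over a period vanishes
  have hint0 : (∫ x in (0:ℝ)..(2 * Real.pi), pdx flux x t₀) = 0 := by
    have hderiv : ∀ x ∈ Set.uIcc (0:ℝ) (2 * Real.pi), HasDerivAt (fun y => flux y t₀)
        (pdx flux x t₀) x := fun x _ => sliceX_hasDerivAt_pdx hfluxc x t₀
    have hcont : Continuous (fun x => pdx flux x t₀) :=
      (contDiff_pdx hfluxc).continuous.comp (continuous_id.prodMk continuous_const)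
    rw [intervalIntegral.integral_eq_sub_of_hasDerivAt hderiv (hcont.intervalIntegrable _ _)]
    have h2pi : (2 * Real.pi) = 0 + 2 * Real.pi := (zero_add _).symm
    have hu0 : u (2 * Real.pi) t₀ = u 0 t₀ := by rw [h2pi]; exact hup t₀ 0
    have hv0 : v (2 * Real.pi) t₀ = v 0 t₀ := by rw [h2pi]; exact hvp t₀ 0
    have hz0 : z (2 * Real.pi) t₀ = z 0 t₀ := by rw [h2pi]; exact hzp t₀ 0
    have hzx0 : pdx z (2 * Real.pi) t₀ = pdx z 0 t₀ := by
      rw [h2pi]; exact periodic_pdx hzp t₀ 0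
    simp only [hfluxdef, hu0, hv0, hz0, hzx0, sub_self]
  -- differentiation under the integral sign
  have hgc : Continuous (Function.uncurry g) := hguc.continuous
  have hgtc : Continuous (fun p : ℝ × ℝ => pdt g p.1 p.2) := (contDiff_pdt hguc).continuous
  obtain ⟨C, hC⟩ := ((isCompact_uIcc (a := (0:ℝ)) (b := 2 * Real.pi)).prod
    (isCompact_Icc (a := t₀ - 1) (b := t₀ + 1))).exists_bound_of_continuousOn
    hgtc.continuousOn
  have main : HasDerivAt (fun s => ∫ x in (0:ℝ)..(2 * Real.pi), g x s)
      (∫ x in (0:ℝ)..(2 * Real.pi), pdt g x t₀) t₀ := by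
    have h := (intervalIntegral.hasDerivAt_integral_of_dominated_loc_of_deriv_le
      (F := fun s x => g x s) (F' := fun s x => pdt g x s) (x₀ := t₀)
      (a := (0:ℝ)) (b := 2 * Real.pi) (bound := fun _ => C) (s := Metric.ball t₀ 1) (μ := MeasureTheory.volume) (Metric.ball_mem_nhds t₀ one_pos)
      (Filter.Eventually.of_forall fun s =>
        ((hgc.comp (continuous_id.prodMk continuous_const)).aestronglyMeasurable))
      ((hgc.comp (continuous_id.prodMk continuous_const)).intervalIntegrable _ _)
      ((hgtc.comp (continuous_id.prodMk continuous_const)).aestronglyMeasurable)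
      (Filter.Eventually.of_forall ?_)
      intervalIntegrable_const
      (Filter.Eventually.of_forall fun x _ s _ => sliceT_hasDerivAt_pdt hguc x s))
    · exact h.2
    · intro x hx s hs
      apply hC (x, s)
      constructor
      · exact Set.uIoc_subset_uIcc hx
      · rw [Metric.mem_ball, Real.dist_eq] at hs
        have h' := abs_lt.1 hs
        show s ∈ Set.Icc (t₀ - 1) (t₀ + 1)
        exact Set.mem_Icc.2 ⟨by linarith [h'.1], by linarith [h'.2]⟩
  have : deriv (fun s => ∫ x in (0:ℝ)..(2 * Real.pi), g x s) t₀
      = ∫ x in (0:ℝ)..(2 * Real.pi), pdt g x t₀ := main.deriv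
  rw [this]
  have : (fun x => pdt g x t₀) = fun x => pdx flux x t₀ := funext fun x => key x t₀
  rw [this]
  exact hint0
end

section
/- Define the 2×2 matrices ℓ(x,t) = [[-λ u_x, -v_x], [λ², λ u_x]] and p(x,t) = 2u·ℓ + [[0,0],[λ,0]], where λ is a parameter. Then the zero-curvature equation ℓ_t - p_x + ℓ·p - p·ℓ = 0 holds for all λ if and only if u_xt = 2(u u_x)_x - v_x and v_xt = (2 u v_x)_x, i.e., on the x-differentiated regularized Ostrovsky–Whitham system. -/
open Real

/-- Entrywise spatial derivative of a matrix-valued function of (x, t). -/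
noncomputable def mpdx {n : ℕ} (M : ℝ → ℝ → Matrix (Fin n) (Fin n) ℝ) (x t : ℝ) :
    Matrix (Fin n) (Fin n) ℝ :=
  Matrix.of fun i j => deriv (fun y => M y t i j) x

/-- Entrywise time derivative of a matrix-valued function of (x, t). -/
noncomputable def mpdt {n : ℕ} (M : ℝ → ℝ → Matrix (Fin n) (Fin n) ℝ) (x t : ℝ) :
    Matrix (Fin n) (Fin n) ℝ :=
  Matrix.of fun i j => deriv (fun s => M x s i j) t

lemma hasDerivAt_pdx {f : ℝ → ℝ → ℝ} (hf : ContDiff ℝ (⊤ : ℕ∞) (Function.uncurry f)) (x t : ℝ) :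
    HasDerivAt (fun y => f y t) (pdx f x t) x := by
  have h1 : DifferentiableAt ℝ (Function.uncurry f) (x, t) :=
    (hf.differentiable (by simp)).differentiableAt
  exact (h1.comp x (differentiableAt_id.prodMk (differentiableAt_const t))).hasDerivAt

lemma hasDerivAt_pdt {f : ℝ → ℝ → ℝ} (hf : ContDiff ℝ (⊤ : ℕ∞) (Function.uncurry f)) (x t : ℝ) :
    HasDerivAt (fun s => f x s) (pdt f x t) t := by
  have h1 : DifferentiableAt ℝ (Function.uncurry f) (x, t) :=
    (hf.differentiable (by simp)).differentiableAt
  exact (h1.comp t ((differentiableAt_const x).prodMk differentiableAt_id)).hasDerivAt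

lemma contDiff_uncurry_pdx {f : ℝ → ℝ → ℝ} (hf : ContDiff ℝ (⊤ : ℕ∞) (Function.uncurry f)) :
    ContDiff ℝ (⊤ : ℕ∞) (Function.uncurry (pdx f)) := by
  have h1 : ContDiff ℝ (⊤ : ℕ∞) (fun p : ℝ × ℝ => fderiv ℝ (Function.uncurry f) p ((1 : ℝ), (0 : ℝ))) :=
    (hf.fderiv_right (by simp)).clm_apply contDiff_const
  have h2 : Function.uncurry (pdx f) = fun p : ℝ × ℝ => fderiv ℝ (Function.uncurry f) p (1, 0) := by
    funext p
    obtain ⟨x, t⟩ := p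
    have hF := ((hf.differentiable (by simp)) (x, t)).hasFDerivAt
    exact (hF.comp_hasDerivAt x ((hasDerivAt_id x).prodMk (hasDerivAt_const x t))).deriv
  rw [h2]; exact h1

theorem statement13
    (u v : ℝ → ℝ → ℝ)
    (hu : ContDiff ℝ (⊤ : ℕ∞) (Function.uncurry u))
    (hv : ContDiff ℝ (⊤ : ℕ∞) (Function.uncurry v))
    (ℓ p : ℝ → ℝ → ℝ → Matrix (Fin 2) (Fin 2) ℝ)
    (hℓ : ∀ lam x t, ℓ lam x t =
      !![-lam * pdx u x t, -pdx v x t; lam ^ 2, lam * pdx u x t])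
    (hp : ∀ lam x t, p lam x t = (2 * u x t) • ℓ lam x t + !![0, 0; lam, 0]) :
    (∀ lam x t,
      mpdt (ℓ lam) x t - mpdx (p lam) x t
        + ℓ lam x t * p lam x t - p lam x t * ℓ lam x t = 0) ↔
    (∀ x t,
      pdt (fun y s => pdx u y s) x t
        = deriv (fun y => 2 * (u y t * pdx u y t)) x - pdx v x t ∧
      pdt (fun y s => pdx v y s) x t
        = deriv (fun y => 2 * u y t * pdx v y t) x) := by
  have hux : ContDiff ℝ (⊤ : ℕ∞) (Function.uncurry (pdx u)) := contDiff_uncurry_pdx hu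
  have hvx : ContDiff ℝ (⊤ : ℕ∞) (Function.uncurry (pdx v)) := contDiff_uncurry_pdx hv
  -- explicit form of p
  have hp' : ∀ lam y s, p lam y s =
      !![-(2 * lam * (u y s * pdx u y s)), -(2 * (u y s * pdx v y s));
         2 * u y s * lam ^ 2 + lam, 2 * lam * (u y s * pdx u y s)] := by
    intro lam y s
    rw [hp, hℓ]
    ext i j
    fin_cases i <;> fin_cases j <;>
      simp [Matrix.smul_apply, Matrix.add_apply, smul_eq_mul] <;> ring
  -- derivative computations
  have key : ∀ lam x t,
      mpdt (ℓ lam) x t - mpdx (p lam) x t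
        + ℓ lam x t * p lam x t - p lam x t * ℓ lam x t =
      !![lam * (2 * (pdx u x t * pdx u x t + u x t * pdx (pdx u) x t)
            - pdx v x t - pdt (pdx u) x t),
         2 * pdx u x t * pdx v x t + 2 * u x t * pdx (pdx v) x t - pdt (pdx v) x t;
         0,
         lam * (pdt (pdx u) x t + pdx v x t
            - 2 * (pdx u x t * pdx u x t + u x t * pdx (pdx u) x t))] := by
    intro lam x t
    have hU : HasDerivAt (fun y => u y t) (pdx u x t) x := hasDerivAt_pdx hu x t
    have hA : HasDerivAt (fun y => pdx u y t) (pdx (pdx u) x t) x := hasDerivAt_pdx hux x t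
    have hB : HasDerivAt (fun y => pdx v y t) (pdx (pdx v) x t) x := hasDerivAt_pdx hvx x t
    have hAt : HasDerivAt (fun s => pdx u x s) (pdt (pdx u) x t) t := hasDerivAt_pdt hux x t
    have hBt : HasDerivAt (fun s => pdx v x s) (pdt (pdx v) x t) t := hasDerivAt_pdt hvx x t
    have hmt : mpdt (ℓ lam) x t =
        !![-lam * pdt (pdx u) x t, -(pdt (pdx v) x t); 0, lam * pdt (pdx u) x t] := by
      ext i j
      fin_cases i <;> fin_cases j <;>
        simp only [mpdt, Matrix.of_apply, hℓ, Matrix.cons_val', Matrix.cons_val_zero,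
          Matrix.cons_val_one, Matrix.head_cons, Matrix.empty_val', Matrix.cons_val_fin_one,
          Matrix.head_fin_const]
      · exact (hAt.const_mul (-lam)).deriv
      · exact hBt.neg.deriv
      · exact deriv_const t _
      · exact (hAt.const_mul lam).deriv
    have hmx : mpdx (p lam) x t =
        !![-(2 * lam * (pdx u x t * pdx u x t + u x t * pdx (pdx u) x t)),
           -(2 * (pdx u x t * pdx v x t + u x t * pdx (pdx v) x t));
           2 * pdx u x t * lam ^ 2, 2 * lam * (pdx u x t * pdx u x t + u x t * pdx (pdx u) x t)]
        := by
      ext i j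
      fin_cases i <;> fin_cases j <;>
        simp only [mpdx, Matrix.of_apply, hp', Matrix.cons_val', Matrix.cons_val_zero,
          Matrix.cons_val_one, Matrix.head_cons, Matrix.empty_val', Matrix.cons_val_fin_one,
          Matrix.head_fin_const]
      · exact (((hU.mul hA).const_mul (2 * lam)).neg).deriv
      · exact (((hU.mul hB).const_mul 2).neg).deriv
      · exact (((hU.const_mul 2).mul_const (lam ^ 2)).add_const lam).deriv
      · exact ((hU.mul hA).const_mul (2 * lam)).deriv
    rw [hmt, hmx, hℓ, hp', Matrix.mul_fin_two, Matrix.mul_fin_two]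
    ext i j
    fin_cases i <;> fin_cases j <;>
      simp [Matrix.sub_apply, Matrix.add_apply] <;> ring
  constructor
  · intro H x t
    have h := (key 1 x t) ▸ (H 1 x t)
    have hd1 : deriv (fun y => 2 * (u y t * pdx u y t)) x
        = 2 * (pdx u x t * pdx u x t + u x t * pdx (pdx u) x t) :=
      (((hasDerivAt_pdx hu x t).mul (hasDerivAt_pdx hux x t)).const_mul 2).deriv
    have hd2 : deriv (fun y => 2 * u y t * pdx v y t) x
        = 2 * pdx u x t * pdx v x t + 2 * u x t * pdx (pdx v) x t :=
      (((hasDerivAt_pdx hu x t).const_mul 2).mul (hasDerivAt_pdx hvx x t)).deriv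
    have h00 := Matrix.ext_iff.mpr h 0 0
    have h01 := Matrix.ext_iff.mpr h 0 1
    simp at h00 h01
    constructor
    · show pdt (pdx u) x t = _
      rw [hd1]; linarith
    · show pdt (pdx v) x t = _
      rw [hd2]; linarith
  · intro H lam x t
    obtain ⟨h1, h2⟩ := H x t
    have hd1 : deriv (fun y => 2 * (u y t * pdx u y t)) x
        = 2 * (pdx u x t * pdx u x t + u x t * pdx (pdx u) x t) :=
      (((hasDerivAt_pdx hu x t).mul (hasDerivAt_pdx hux x t)).const_mul 2).deriv
    have hd2 : deriv (fun y => 2 * u y t * pdx v y t) x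
        = 2 * pdx u x t * pdx v x t + 2 * u x t * pdx (pdx v) x t :=
      (((hasDerivAt_pdx hu x t).const_mul 2).mul (hasDerivAt_pdx hvx x t)).deriv
    rw [hd1] at h1
    rw [hd2] at h2
    rw [key]
    have h1' : pdt (pdx u) x t
        = 2 * (pdx u x t * pdx u x t + u x t * pdx (pdx u) x t) - pdx v x t := h1
    have h2' : pdt (pdx v) x t
        = 2 * pdx u x t * pdx v x t + 2 * u x t * pdx (pdx v) x t := h2
    ext i j
    fin_cases i <;> fin_cases j <;>
      simp only [Fin.mk_zero, Fin.mk_one, Matrix.of_apply, Matrix.cons_val', Matrix.cons_val_zero,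
        Matrix.cons_val_one, Matrix.head_cons, Matrix.empty_val', Matrix.cons_val_fin_one,
        Matrix.head_fin_const, Matrix.zero_apply]
    · linear_combination (-lam) * h1'
    · linear_combination -h2'
    · linear_combination lam * h1'
end
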